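/- Let G₁ and G₂ be nontrivial groups, not both of order 2, with G₁ of order at least 3. Then the free product G₁ * G₂ contains a free subgroup of rank 2. -/

import Mathlib

/-!
Choose `a₁ ≠ a₂` in `G₁ \ {1}` and `b ∈ G₂ \ {1}`. The elements `(aₖ b)²` generate a free group, by
ping-pong on reduced words: `(aₖ b)²` maps every reduced word not beginning with `b⁻¹ aₖ⁻¹` to one
beginning with `aₖ b`, because at most the two letters `b` and `aₖ` of `aₖ b aₖ b` can be absorbed;
symmetrically `(aₖ b)⁻² = (b⁻¹ aₖ⁻¹)²` maps every word not beginning with `aₖ b` to one beginning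
with `b⁻¹ aₖ⁻¹`.
-/

open Function Pointwise

universe u v

theorem List.eq_of_prefix_of_length_eq {α : Type*} {l₁ l₂ l : List α} (h₁ : l₁ <+: l)
    (h₂ : l₂ <+: l) (h : l₁.length = l₂.length) : l₁ = l₂ :=
  (List.prefix_of_prefix_length_le h₁ h₂ h.le).eq_of_length h

-- Unlike `FreeGroup.injective_lift_of_ping_pong`, `ι` and `G` may live in different universes.
theorem FreeGroup.injective_lift_of_ping_pong' {ι : Type u} [Nontrivial ι] {G : Type v}
    [Group G] (a : ι → G) {α : Type*} [MulAction G α] (X Y : ι → Set α)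
    (hXnonempty : ∀ i, (X i).Nonempty) (hXdisj : Pairwise (Disjoint on X))
    (hYdisj : Pairwise (Disjoint on Y)) (hXYdisj : ∀ i j, Disjoint (X i) (Y j))
    (hX : ∀ i, a i • (Y i)ᶜ ⊆ X i) (hY : ∀ i, a⁻¹ i • (X i)ᶜ ⊆ Y i) :
    Injective (FreeGroup.lift a) := by
  let e : ULift.{v} ι ≃ ι := Equiv.ulift
  let a' : ULift.{v} ι → ULift.{u} G := fun i => ULift.up (a (e i))
  have h : FreeGroup.lift a = (MulEquiv.ulift.toMonoidHom.comp (FreeGroup.lift a')).comp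
      (FreeGroup.freeGroupCongr e.symm).toMonoidHom := by
    ext i; rfl
  have ha' : Injective (FreeGroup.lift a') :=
    FreeGroup.injective_lift_of_ping_pong a' (X ∘ e) (Y ∘ e) (fun i => hXnonempty _)
      (fun i j hij => hXdisj (e.injective.ne hij)) (fun i j hij => hYdisj (e.injective.ne hij))
      (fun i j => hXYdisj _ _) (fun i => hX _) (fun i => hY _)
  rw [h]
  exact (MulEquiv.ulift.injective.comp ha').comp (FreeGroup.freeGroupCongr e.symm).injective

namespace Monoid.CoprodI.Word

variable {ι : Type*} [DecidableEq ι] {M : ι → Type*} [∀ i, Group (M i)] [∀ i, DecidableEq (M i)]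

theorem toList_of_smul_of_fstIdx_ne {i : ι} {m : M i} (hm : m ≠ 1) {w : Word M}
    (hw : w.fstIdx ≠ some i) : (of m • w).toList = ⟨i, m⟩ :: w.toList := by
  rw [← cons_eq_smul (h1 := hw) (h2 := hm), cons_toList]

theorem fstIdx_of_smul_of_fstIdx_ne {i : ι} {m : M i} (hm : m ≠ 1) {w : Word M}
    (hw : w.fstIdx ≠ some i) : (of m • w).fstIdx = some i := by
  simp [fstIdx, toList_of_smul_of_fstIdx_ne hm hw]

theorem fstIdx_of_smul {i : ι} {m : M i} (hm : m ≠ 1) {w : Word M}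
    (hw : w.toList.head? ≠ some ⟨i, m⁻¹⟩) : (of m • w).fstIdx = some i := by
  induction w using consRecOn with
  | empty => exact fstIdx_of_smul_of_fstIdx_ne hm (by rintro ⟨⟩)
  | cons k m' w' h1 _ _ =>
    by_cases hk : k = i
    · subst hk
      have hmm' : m * m' ≠ 1 := fun h => hw (by simp [eq_inv_of_mul_eq_one_right h])
      rw [cons_eq_smul, ← mul_smul, ← map_mul]
      exact fstIdx_of_smul_of_fstIdx_ne hmm' h1
    · exact fstIdx_of_smul_of_fstIdx_ne hm (by simp [hk])

theorem toList_head?_of_smul_ne {i j : ι} (hij : i ≠ j) {s : M j} (hs : s ≠ 1) {p : M i}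
    {w : Word M} (hw : ¬ [⟨j, s⁻¹⟩, ⟨i, p⁻¹⟩] <+: w.toList) :
    (of s • w).toList.head? ≠ some ⟨i, p⁻¹⟩ := by
  by_cases hw₁ : w.toList.head? = some ⟨j, s⁻¹⟩
  · induction w using consRecOn with
    | empty => simp [empty] at hw₁
    | cons k m w' _ _ _ =>
      obtain ⟨rfl, hm⟩ : k = j ∧ HEq m s⁻¹ := by simpa using hw₁
      subst hm
      rw [cons_eq_smul, ← mul_smul, ← map_mul, mul_inv_cancel, map_one, one_smul]
      simpa [List.cons_prefix_cons, List.singleton_prefix_iff_head?_eq_some] using hw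
  · intro h
    have hj := fstIdx_of_smul hs hw₁
    simp only [fstIdx, h, Option.map_some, Option.some.injEq] at hj
    exact hij hj

theorem prefix_toList_sq_smul {i j : ι} (hij : i ≠ j) {p : M i} {s : M j} (hp : p ≠ 1)
    (hs : s ≠ 1) {w : Word M} (hw : ¬ [⟨j, s⁻¹⟩, ⟨i, p⁻¹⟩] <+: w.toList) :
    [⟨i, p⟩, ⟨j, s⟩] <+: ((of p * of s) ^ 2 • w).toList := by
  have hv : (of p • of s • w).fstIdx ≠ some j := by
    rw [fstIdx_of_smul hp (toList_head?_of_smul_ne hij hs hw)]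
    exact (Option.some_injective _).ne hij
  simp only [sq, mul_smul]
  rw [toList_of_smul_of_fstIdx_ne hp
      (by rw [fstIdx_of_smul_of_fstIdx_ne hs hv]; exact (Option.some_injective _).ne hij.symm),
    toList_of_smul_of_fstIdx_ne hs hv]
  simp

end Monoid.CoprodI.Word

namespace Monoid.CoprodI

open Word

theorem injective_lift_sq_of_mul_of {ι : Type*} {M : ι → Type*} [∀ i, Group (M i)] {i j : ι}
    (hij : i ≠ j) {κ : Type*} [Nontrivial κ] {x : κ → M i} (hx : Injective x)
    (hx₁ : ∀ k, x k ≠ 1) {b : M j} (hb : b ≠ 1) :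
    Injective (FreeGroup.lift fun k => (of (x k) * of b) ^ 2) := by
  classical
  let X k : Set (Word M) := {w | [⟨i, x k⟩, ⟨j, b⟩] <+: w.toList}
  let Y k : Set (Word M) := {w | [⟨j, b⁻¹⟩, ⟨i, (x k)⁻¹⟩] <+: w.toList}
  have hX k : (of (x k) * of b) ^ 2 • (Y k)ᶜ ⊆ X k := by
    rintro _ ⟨w, hw, rfl⟩
    exact prefix_toList_sq_smul hij (hx₁ k) hb hw
  have hY k : ((of (x k) * of b) ^ 2)⁻¹ • (X k)ᶜ ⊆ Y k := by
    rintro _ ⟨w, hw, rfl⟩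
    change _ <+: (((of (x k) * of b) ^ 2)⁻¹ • w).toList
    rw [← inv_pow, mul_inv_rev, ← map_inv, ← map_inv]
    exact prefix_toList_sq_smul hij.symm (inv_ne_one.2 hb) (inv_ne_one.2 (hx₁ k))
      (by simpa [X] using hw)
  refine FreeGroup.injective_lift_of_ping_pong' _ X Y (fun k => ⟨_, hX k ⟨empty, ?_, rfl⟩⟩)
    ?_ ?_ ?_ hX hY
  · simp [Y, empty]
  · refine fun k l hkl => Set.disjoint_left.2 fun w hk hl => hkl (hx ?_)
    simpa using List.eq_of_prefix_of_length_eq hk hl rfl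
  · refine fun k l hkl => Set.disjoint_left.2 fun w hk hl => hkl (hx ?_)
    simpa using List.eq_of_prefix_of_length_eq hk hl rfl
  · exact fun k l => Set.disjoint_left.2 fun w hk hl =>
      hij (congr_arg Sigma.fst (List.cons.inj (List.eq_of_prefix_of_length_eq hk hl rfl)).1)

end Monoid.CoprodI

namespace Monoid.Coprod

variable (G₁ : Type u) (G₂ : Type v) [Group G₁] [Group G₂]

-- `G₁ ∗ G₂` is mapped into the `Bool`-indexed free product, where reduced words are available.
abbrev Factor : Bool → Type (max u v) := fun b => cond b (ULift.{v} G₁) (ULift.{u} G₂)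

instance : ∀ b, Group (Factor G₁ G₂ b)
  | true => inferInstanceAs (Group (ULift G₁))
  | false => inferInstanceAs (Group (ULift G₂))

def toCoprodI : G₁ ∗ G₂ →* CoprodI (Factor G₁ G₂) :=
  lift ((CoprodI.of (i := true)).comp MulEquiv.ulift.symm.toMonoidHom)
    ((CoprodI.of (i := false)).comp MulEquiv.ulift.symm.toMonoidHom)

variable {G₁ G₂}

theorem injective_lift_sq_inl_mul_inr {ι : Type*} [Nontrivial ι] {x : ι → G₁} (hx : Injective x)
    (hx₁ : ∀ i, x i ≠ 1) {b : G₂} (hb : b ≠ 1) :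
    Injective (FreeGroup.lift fun i => (inl (x i) * inr b : G₁ ∗ G₂) ^ 2) := by
  have h : (toCoprodI G₁ G₂).comp (FreeGroup.lift fun i => (inl (x i) * inr b) ^ 2) =
      FreeGroup.lift fun i => (CoprodI.of (M := Factor G₁ G₂) (i := true) (ULift.up (x i))
        * CoprodI.of (M := Factor G₁ G₂) (i := false) (ULift.up b)) ^ 2 := by
    ext i
    rfl
  refine Injective.of_comp (f := toCoprodI G₁ G₂) ?_
  rw [← MonoidHom.coe_comp, h]
  exact CoprodI.injective_lift_sq_of_mul_of (M := Factor G₁ G₂) (i := true) (j := false)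
    (by decide) (x := fun i => ULift.up (x i)) (ULift.up_injective.comp hx)
    (fun i h => hx₁ i (congr_arg ULift.down h)) (fun h => hb (congr_arg ULift.down h))

end Monoid.Coprod

theorem coprod_contains_free_rank_two_general (G₁ G₂ : Type*) [Group G₁] [Group G₂]
    [Nontrivial G₂] (hG₁ : 3 ≤ Cardinal.mk G₁) :
    ∃ φ : FreeGroup (Fin 2) →* Monoid.Coprod G₁ G₂, Function.Injective φ := by
  obtain ⟨a₁, ha₁, -⟩ := Cardinal.exists_ne_ne_of_three_le hG₁ 1 1
  obtain ⟨a₂, ha₂, ha₂₁⟩ := Cardinal.exists_ne_ne_of_three_le hG₁ 1 a₁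
  obtain ⟨b, hb⟩ := exists_ne (1 : G₂)
  exact ⟨_, Monoid.Coprod.injective_lift_sq_inl_mul_inr (x := ![a₁, a₂])
    (injective_pair_iff_ne.2 ha₂₁.symm) (by simp [Fin.forall_fin_two, ha₁, ha₂]) hb⟩

/-- If G₁ and G₂ are nontrivial groups with |G₁| ≥ 3, then the free product G₁ * G₂
contains a free subgroup of rank 2. -/
theorem coprod_contains_free_rank_two (G₁ G₂ : Type*) [Group G₁] [Group G₂]
    [Nontrivial G₁] [Nontrivial G₂] (hG₁ : 3 ≤ Cardinal.mk G₁) :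
    ∃ φ : FreeGroup (Fin 2) →* Monoid.Coprod G₁ G₂, Function.Injective φ :=
  coprod_contains_free_rank_two_general G₁ G₂ hG₁
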